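/- arXiv:1505.01424 — 2 statements merged into one kernel-verified Lean document; each statement's English description precedes it below -/
import Mathlib

section
/- Let G and H be connected non-bipartite graphs. Then mc(G × H) ≥ mc(G)·mc(H) + 2. -/
open SimpleGraph

/-- An edge-coloring `c` of `G` is a *monochromatic connection coloring* (MC-coloring)
if any two vertices of `G` are joined by a monochromatic walk, i.e. a walk all of whose
edges receive the same color. -/
def SimpleGraph.IsMCColoring {V : Type*} (G : SimpleGraph V) (c : Sym2 V → ℕ) : Prop :=
  ∀ u v : V, ∃ w : G.Walk u v, ∃ k : ℕ, ∀ e ∈ w.edges, c e = k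

/-- The *monochromatic connection number* `mc G`: the maximum number of colors used
on the edges of `G` by an MC-coloring of `G`. -/
noncomputable def SimpleGraph.mc {V : Type*} (G : SimpleGraph V) : ℕ :=
  sSup {n | ∃ c : Sym2 V → ℕ, G.IsMCColoring c ∧ (c '' G.edgeSet).ncard = n}

/-- The lexicographic product `G ∘ H`: `(g,h)` and `(g',h')` are adjacent iff
`gg' ∈ E(G)`, or `g = g'` and `hh' ∈ E(H)`. -/
def SimpleGraph.lexProd {α β : Type*} (G : SimpleGraph α) (H : SimpleGraph β) :
    SimpleGraph (α × β) where
  Adj x y := G.Adj x.1 y.1 ∨ (x.1 = y.1 ∧ H.Adj x.2 y.2)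
  symm := by
    constructor
    rintro x y (h | ⟨h1, h2⟩)
    · exact Or.inl h.symm
    · exact Or.inr ⟨h1.symm, h2.symm⟩
  loopless := by
    constructor
    rintro x (h | ⟨-, h⟩)
    · exact G.loopless.irrefl _ h
    · exact H.loopless.irrefl _ h

/-- The strong product `G ⊠ H`: `(g,h)` and `(g',h')` are adjacent iff
`gg' ∈ E(G)` and `h = h'`, or `g = g'` and `hh' ∈ E(H)`, or `gg' ∈ E(G)` and `hh' ∈ E(H)`. -/
def SimpleGraph.strongProd {α β : Type*} (G : SimpleGraph α) (H : SimpleGraph β) :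
    SimpleGraph (α × β) where
  Adj x y := (G.Adj x.1 y.1 ∧ x.2 = y.2) ∨ (x.1 = y.1 ∧ H.Adj x.2 y.2) ∨
      (G.Adj x.1 y.1 ∧ H.Adj x.2 y.2)
  symm := by
    constructor
    rintro x y (⟨h1, h2⟩ | ⟨h1, h2⟩ | ⟨h1, h2⟩)
    · exact Or.inl ⟨h1.symm, h2.symm⟩
    · exact Or.inr (Or.inl ⟨h1.symm, h2.symm⟩)
    · exact Or.inr (Or.inr ⟨h1.symm, h2.symm⟩)
  loopless := by
    constructor
    rintro x (⟨h, -⟩ | ⟨-, h⟩ | ⟨h, -⟩)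
    · exact G.loopless.irrefl _ h
    · exact H.loopless.irrefl _ h
    · exact G.loopless.irrefl _ h

/-- The direct (tensor) product `G × H`: `(g,h)` and `(g',h')` are adjacent iff
`gg' ∈ E(G)` and `hh' ∈ E(H)`. -/
def SimpleGraph.tensorProd {α β : Type*} (G : SimpleGraph α) (H : SimpleGraph β) :
    SimpleGraph (α × β) where
  Adj x y := G.Adj x.1 y.1 ∧ H.Adj x.2 y.2
  symm := by
    constructor
    rintro x y ⟨h1, h2⟩
    exact ⟨h1.symm, h2.symm⟩
  loopless := by
    constructor
    rintro x ⟨h, -⟩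
    exact G.loopless.irrefl _ h

/-- The Cartesian (box) product of a finite family of graphs: two tuples are adjacent
iff they agree in all coordinates but one, where they are adjacent. -/
def SimpleGraph.piBoxProd {n : ℕ} {V : Fin n → Type*} (G : ∀ i, SimpleGraph (V i)) :
    SimpleGraph (∀ i, V i) where
  Adj x y := ∃ i, (G i).Adj (x i) (y i) ∧ ∀ j, j ≠ i → x j = y j
  symm := by
    constructor
    rintro x y ⟨i, hadj, heq⟩
    exact ⟨i, hadj.symm, fun j hj => (heq j hj).symm⟩
  loopless := by
    constructor
    rintro x ⟨i, hadj, -⟩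
    exact (G i).loopless.irrefl _ hadj

/-- The (iterated, left-associated) lexicographic product of a finite family of graphs:
two tuples are adjacent iff at the least coordinate where they differ,
they are adjacent. -/
def SimpleGraph.piLexProd {n : ℕ} {V : Fin n → Type*} (G : ∀ i, SimpleGraph (V i)) :
    SimpleGraph (∀ i, V i) where
  Adj x y := ∃ i, (G i).Adj (x i) (y i) ∧ ∀ j, j < i → x j = y j
  symm := by
    constructor
    rintro x y ⟨i, hadj, heq⟩
    exact ⟨i, hadj.symm, fun j hj => (heq j hj).symm⟩
  loopless := by
    constructor
    rintro x ⟨i, hadj, -⟩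
    exact (G i).loopless.irrefl _ hadj

/-!
Any connected graph with `m` edges and `n ≥ 2` vertices has `mc ≥ m - n + 2`: give a spanning
tree one color and every other edge its own color. The direct product `G × H` of connected
non-bipartite graphs is connected (walks of every large length join any two vertices of each
factor), has `2 m_G m_H` edges and `n_G n_H` vertices, and `n ≤ m` in each factor because a
non-bipartite connected graph is not a tree. Hence
`mc (G × H) ≥ 2 m_G m_H - n_G n_H + 2 ≥ m_G m_H + 2 ≥ mc G · mc H + 2`.
-/

namespace SimpleGraph

variable {V : Type*} {G : SimpleGraph V}

lemma bddAbove_mcSet [Finite V] (G : SimpleGraph V) :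
    BddAbove {n | ∃ c : Sym2 V → ℕ, G.IsMCColoring c ∧ (c '' G.edgeSet).ncard = n} := by
  refine ⟨Nat.card G.edgeSet, ?_⟩
  rintro n ⟨c, -, rfl⟩
  exact Set.ncard_image_le G.edgeSet.toFinite

lemma mc_le_card_edgeSet [Finite V] (G : SimpleGraph V) : G.mc ≤ Nat.card G.edgeSet :=
  csSup_le' fun _ ⟨_, _, hn⟩ => hn ▸ Set.ncard_image_le G.edgeSet.toFinite

lemma IsMCColoring.ncard_image_le_mc [Finite V] {c : Sym2 V → ℕ} (hc : G.IsMCColoring c) :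
    (c '' G.edgeSet).ncard ≤ G.mc :=
  le_csSup (bddAbove_mcSet G) ⟨c, hc, rfl⟩

lemma isMCColoring_of_le_of_forall_edgeSet_eq {T : SimpleGraph V} (hTG : T ≤ G)
    (hT : T.Connected) {c : Sym2 V → ℕ} {k : ℕ} (hc : ∀ e ∈ T.edgeSet, c e = k) :
    G.IsMCColoring c := by
  intro u v
  obtain ⟨w⟩ := hT u v
  refine ⟨w.mapLe hTG, k, fun e he => hc e (w.edges_subset_edgeSet ?_)⟩
  rwa [Walk.edges_mapLe_eq_edges] at he

theorem Connected.card_edgeSet_add_two_le_mc_add_card [Finite V] [Nontrivial V]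
    (hG : G.Connected) : Nat.card G.edgeSet + 2 ≤ G.mc + Nat.card V := by
  obtain ⟨T, hTG, hT⟩ := hG.exists_isTree_le
  obtain ⟨f, hf⟩ := Countable.exists_injective_nat (Sym2 V)
  classical
  let c : Sym2 V → ℕ := fun e => if e ∈ T.edgeSet then 0 else f e + 1
  have hcT : ∀ e ∈ T.edgeSet, c e = 0 := fun e he => if_pos he
  have hmc : (c '' G.edgeSet).ncard ≤ G.mc :=
    (isMCColoring_of_le_of_forall_edgeSet_eq hTG hT.connected hcT).ncard_image_le_mc
  have hTcard : Nat.card T.edgeSet + 1 = Nat.card V := (isTree_iff_connected_and_card.1 hT).2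
  have hTne : T.edgeSet.Nonempty := by
    refine Set.nonempty_of_ncard_ne_zero ?_
    have := Finite.one_lt_card (α := V)
    rw [Nat.card_coe_set_eq] at hTcard
    omega
  have hsub : insert 0 ((f · + 1) '' (G.edgeSet \ T.edgeSet)) ⊆ c '' G.edgeSet := by
    rintro _ (rfl | ⟨e, he, rfl⟩)
    · obtain ⟨e, he⟩ := hTne
      exact ⟨e, edgeSet_mono hTG he, hcT e he⟩
    · exact ⟨e, he.1, if_neg he.2⟩
  have hcount := Set.ncard_le_ncard hsub ((G.edgeSet.toFinite).image c)
  rw [Set.ncard_insert_of_notMem (by simp), Set.ncard_image_of_injective _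
    (show Function.Injective (f · + 1) from (add_left_injective 1).comp hf),
    Set.ncard_sdiff (edgeSet_mono hTG),
    ← Nat.card_coe_set_eq, ← Nat.card_coe_set_eq] at hcount
  have hTle : Nat.card T.edgeSet ≤ Nat.card G.edgeSet :=
    Nat.card_mono G.edgeSet.toFinite (edgeSet_mono hTG)
  omega

lemma Walk.exists_length_eq_add_two_mul {u v w : V} (p : G.Walk u v) (hvw : G.Adj v w)
    (k : ℕ) : ∃ q : G.Walk u v, q.length = p.length + 2 * k := by
  induction k with
  | zero => exact ⟨p, rfl⟩
  | succ k ih =>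
    obtain ⟨q, hq⟩ := ih
    exact ⟨q.append (.cons hvw (.cons hvw.symm .nil)), by simp [hq]; ring⟩

lemma Connected.exists_walk_odd_length (hG : G.Connected) (hb : ¬ G.Colorable 2) (v : V) :
    ∃ w : G.Walk v v, Odd w.length := by
  obtain ⟨x, C, hC⟩ : ∃ x, ∃ C : G.Walk x x, Odd C.length := by
    simpa [two_colorable_iff_forall_loop_even] using hb
  obtain ⟨q⟩ := hG v x
  refine ⟨q.append (C.append q.reverse), ?_⟩
  rw [Walk.length_append, Walk.length_append, Walk.length_reverse, add_comm, add_assoc]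
  exact hC.add_even ⟨_, rfl⟩

/-- In a connected non-bipartite graph, walks of both parities join any two vertices, and
walks can be lengthened by `2`, so every sufficiently large length is realized. -/
lemma Connected.exists_walk_length_eq_of_le (hG : G.Connected) (hb : ¬ G.Colorable 2)
    (u v : V) : ∃ N, ∀ L, N ≤ L → ∃ w : G.Walk u v, w.length = L := by
  obtain ⟨p⟩ := hG u v
  obtain ⟨C, hC⟩ := hG.exists_walk_odd_length hb v
  have hvC : G.Adj v C.snd := Walk.adj_snd (Walk.not_nil_iff_lt_length.2 hC.pos)
  refine ⟨p.length + C.length, fun L hL => ?_⟩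
  rcases Nat.even_or_odd (L + p.length) with hpar | hpar
  · obtain ⟨q, hq⟩ := p.exists_length_eq_add_two_mul hvC ((L - p.length) / 2)
    rw [Nat.even_iff] at hpar
    exact ⟨q, by omega⟩
  · obtain ⟨q, hq⟩ := (p.append C).exists_length_eq_add_two_mul hvC
      ((L - p.length - C.length) / 2)
    refine ⟨q, ?_⟩
    rw [hq, Walk.length_append]
    rw [Nat.odd_iff] at hpar hC
    omega

section TensorProd

variable {α β : Type*} {G : SimpleGraph α} {H : SimpleGraph β}

lemma tensorProd_reachable_of_length_eq {a b : α} (p : G.Walk a b) :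
    ∀ {c d : β} (q : H.Walk c d), p.length = q.length →
      (G.tensorProd H).Reachable (a, c) (b, d) := by
  induction p with
  | nil =>
    rintro _ _ (_ | _) h
    · rfl
    · simp at h
  | cons hG p ih =>
    rintro _ _ (_ | ⟨hH, q⟩) h
    · simp at h
    · exact (show (G.tensorProd H).Adj _ _ from ⟨hG, hH⟩).reachable.trans
        (ih q (by simpa using h))

lemma Connected.tensorProd (hG : G.Connected) (hH : H.Connected) (hGb : ¬ G.Colorable 2)
    (hHb : ¬ H.Colorable 2) : (G.tensorProd H).Connected := by
  have := hG.nonempty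
  have := hH.nonempty
  refine .mk fun ⟨a, c⟩ ⟨b, d⟩ => ?_
  obtain ⟨M, hM⟩ := hG.exists_walk_length_eq_of_le hGb a b
  obtain ⟨N, hN⟩ := hH.exists_walk_length_eq_of_le hHb c d
  obtain ⟨p, hp⟩ := hM (max M N) (le_max_left _ _)
  obtain ⟨q, hq⟩ := hN (max M N) (le_max_right _ _)
  exact tensorProd_reachable_of_length_eq p q (hp.trans hq.symm)

variable (G H) in
def tensorProdDartEquiv : (G.tensorProd H).Dart ≃ G.Dart × H.Dart where
  toFun d := (⟨(d.fst.1, d.snd.1), d.adj.1⟩, ⟨(d.fst.2, d.snd.2), d.adj.2⟩)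
  invFun p := ⟨((p.1.fst, p.2.fst), (p.1.snd, p.2.snd)), ⟨p.1.adj, p.2.adj⟩⟩

variable (G H) in
lemma card_edgeSet_tensorProd [Finite α] [Finite β] :
    Nat.card (G.tensorProd H).edgeSet = 2 * (Nat.card G.edgeSet * Nat.card H.edgeSet) := by
  classical
  have := Fintype.ofFinite α
  have := Fintype.ofFinite β
  have hdarts := Fintype.card_congr (tensorProdDartEquiv G H)
  rw [Fintype.card_prod, dart_card_eq_twice_card_edges, dart_card_eq_twice_card_edges,
    dart_card_eq_twice_card_edges] at hdarts
  simp only [Nat.card_eq_fintype_card, ← edgeFinset_card]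
  linarith

end TensorProd

lemma Connected.card_le_card_edgeSet_of_not_colorable_two [Finite V] (hG : G.Connected)
    (hb : ¬ G.Colorable 2) :
    Nat.card V ≤ Nat.card G.edgeSet := by
  have hne : Nat.card G.edgeSet + 1 ≠ Nat.card V :=
    fun h => hb (isTree_iff_connected_and_card.2 ⟨hG, h⟩).colorable_two
  have := hG.card_vert_le_card_edgeSet_add_one
  omega

lemma nontrivial_of_not_colorable_two (hb : ¬ G.Colorable 2) : Nontrivial V := by
  by_contra hV
  rw [not_nontrivial_iff_subsingleton] at hV
  exact hb ⟨Coloring.mk (fun _ => 0) fun hadj _ => hadj.ne (Subsingleton.elim _ _)⟩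

end SimpleGraph

/-- Corollary 2.4: for connected non-bipartite `G` and `H`, `mc(G × H) ≥ mc(G)·mc(H) + 2`. -/
theorem mc_tensorProd_lower_bound {α β : Type*} [Fintype α] [Fintype β]
    (G : SimpleGraph α) (H : SimpleGraph β)
    (hG : G.Connected) (hH : H.Connected)
    (hGb : ¬ G.Colorable 2) (hHb : ¬ H.Colorable 2) :
    G.mc * H.mc + 2 ≤ (G.tensorProd H).mc := by
  have := nontrivial_of_not_colorable_two hGb
  have := hH.nonempty
  have hprod := (hG.tensorProd hH hGb hHb).card_edgeSet_add_two_le_mc_add_card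
  rw [card_edgeSet_tensorProd, Nat.card_prod] at hprod
  have hmc : G.mc * H.mc ≤ Nat.card G.edgeSet * Nat.card H.edgeSet :=
    Nat.mul_le_mul G.mc_le_card_edgeSet H.mc_le_card_edgeSet
  have hcard : Nat.card α * Nat.card β ≤ Nat.card G.edgeSet * Nat.card H.edgeSet :=
    Nat.mul_le_mul (hG.card_le_card_edgeSet_of_not_colorable_two hGb)
      (hH.card_le_card_edgeSet_of_not_colorable_two hHb)
  omega
end

section
/- For integers n ≥ 4 and m ≥ 3, the lexicographic product of paths satisfies mc(P_n ∘ P_m) = m²n − m² − n + 2. -/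
open SimpleGraph

/-!
For a connected graph `G` with two vertices `x`, `y` at distance at least three,
`mc G = |E(G)| - |V(G)| + 2`. A spanning tree in one colour, with every other edge in a colour
of its own, attains this. Conversely, send every vertex to the colour of a
monochromatic path joining it to whichever of `x`, `y` it is not adjacent to, and send `x` and
`y` to the colour `k₀` of a path between them. Shortest paths towards `x` and `y` inside a colour
class give every vertex sent to that colour an edge of its own, and leave a spare edge; in the
colour `k₀` all vertices but `x` get an edge. Summing over the colours,
`|V(G)| + #colours ≤ |E(G)| + 2`.

`P_n ∘ P_m` is connected, `(0, 0)` and `(3, 0)` are at distance at least three when `n ≥ 4`,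
and counting degrees gives `(n - 1) m² + n (m - 1)` edges.
-/

open Finset in
theorem ncard_image_add_card_le_of_fiberwise {α β γ : Type*} [Fintype α] [DecidableEq γ]
    {E : Set β} (hE : E.Finite) (c : β → γ) (f : α → γ) (k₀ : γ) (hf : ∀ a, f a ∈ c '' E)
    (h : ∀ k ∈ c '' E,
      {a | f a = k}.ncard + 1 ≤ {e ∈ E | c e = k}.ncard + if k = k₀ then 2 else 0) :
    (c '' E).ncard + Fintype.card α ≤ E.ncard + 2 := by
  obtain ⟨s, rfl⟩ := hE.exists_finset_coe
  have hfiber : ∀ k, {a | f a = k}.ncard = #{a | f a = k} := fun k ↦ by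
    rw [← Set.ncard_coe_finset, coe_filter]; simp
  have hfiberE : ∀ k, {e ∈ (s : Set β) | c e = k}.ncard = #{e ∈ s | c e = k} := fun k ↦ by
    rw [← Set.ncard_coe_finset, coe_filter]; rfl
  rw [← coe_image] at hf h ⊢
  simp only [hfiber, hfiberE, Set.ncard_coe_finset] at h ⊢
  simp only [Finset.mem_coe] at hf h
  calc #(s.image c) + Fintype.card α = ∑ k ∈ s.image c, (#{a | f a = k} + 1) := by
        rw [sum_add_distrib, ← card_univ, ← card_eq_sum_card_fiberwise fun a _ ↦ hf a,
          sum_const, smul_eq_mul, mul_one, add_comm]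
    _ ≤ ∑ k ∈ s.image c, (#{e ∈ s | c e = k} + if k = k₀ then 2 else 0) := sum_le_sum h
    _ = #s + if k₀ ∈ s.image c then 2 else 0 := by
        rw [sum_add_distrib, ← card_eq_sum_card_fiberwise fun e he ↦ mem_image_of_mem c he,
          sum_ite_eq']
    _ ≤ #s + 2 := by split_ifs <;> omega

namespace SimpleGraph

variable {V : Type*}

section Forest

variable {H : SimpleGraph V}

lemma Reachable.exists_adj_dist_lt {x w : V} (h : H.Reachable x w) (hne : w ≠ x) :
    ∃ u, H.Adj u w ∧ H.dist x u < H.dist x w := by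
  obtain ⟨p, hp⟩ := h.symm.exists_walk_length_eq_dist
  cases p with
  | nil => exact absurd rfl hne
  | @cons _ v _ ha q =>
    refine ⟨v, ha.symm, ?_⟩
    have hq : H.dist v x ≤ q.length := dist_le q
    rw [Walk.length_cons] at hp
    rw [dist_comm (u := x) (v := v), dist_comm (u := x) (v := w)]
    omega

/-- Send each vertex of `W` to the last edge of a shortest path from its root. -/
theorem ncard_le_ncard_edgeSet_of_forall_reachable [Finite V] {R W : Set V}
    (hR : R.Pairwise fun a b ↦ ¬H.Reachable a b)
    (hW : ∀ u ∈ W, u ∉ R ∧ ∃ r ∈ R, H.Reachable r u) :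
    W.ncard ≤ H.edgeSet.ncard := by
  choose! root hroot hreach using fun u hu ↦ (hW u hu).2
  have hroot_ne : ∀ u ∈ W, u ≠ root u := fun u hu h ↦ (hW u hu).1 (h ▸ hroot u hu)
  choose! parent hadj hlt using fun u hu ↦ (hreach u hu).exists_adj_dist_lt (hroot_ne u hu)
  refine Set.ncard_le_ncard_of_injOn (fun u ↦ s(parent u, u)) (fun u hu ↦ hadj u hu) ?_
    (Set.toFinite _)
  intro a ha b hb hab
  rcases Sym2.eq_iff.mp hab with ⟨-, h⟩ | ⟨hab, hba⟩
  · exact h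
  · have hsame : root a = root b := by
      by_contra hne
      refine hR (hroot a ha) (hroot b hb) hne ((hreach a ha).trans ?_)
      rw [hba]
      exact (hadj b hb).reachable.trans (hreach b hb).symm
    have h₁ := hlt a ha
    have h₂ := hlt b hb
    rw [hab, hsame] at h₁
    rw [← hba] at h₂
    omega

theorem ncard_le_ncard_edgeSet_add_one [Finite V] {x : V} {S : Set V}
    (hS : ∀ u ∈ S, H.Reachable x u) : S.ncard ≤ H.edgeSet.ncard + 1 := by
  refine (Set.ncard_le_ncard_sdiff_add_ncard S {x}).trans ?_
  rw [Set.ncard_singleton]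
  gcongr
  exact ncard_le_ncard_edgeSet_of_forall_reachable (Set.pairwise_singleton x _)
    fun u hu ↦ ⟨hu.2, x, rfl, hS u hu.1⟩

/-- Besides the vertices of `S`, one more vertex gets an edge of its own: `y` if it is joined to
`x`, and otherwise a neighbour of a root. -/
theorem ncard_add_one_le_ncard_edgeSet [Finite V] {x y : V} (hxy : x ≠ y) {S : Set V}
    (hS : S.Nonempty) (hx : x ∉ S) (hy : y ∉ S)
    (h : ∀ u ∈ S, ∃ z ∈ ({x, y} : Set V), ¬H.Adj u z ∧ H.Reachable z u) :
    S.ncard + 1 ≤ H.edgeSet.ncard := by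
  by_cases hxy_reach : H.Reachable x y
  · rw [← Set.ncard_insert_of_notMem hy]
    refine ncard_le_ncard_edgeSet_of_forall_reachable (R := {x}) (Set.pairwise_singleton _ _) ?_
    rintro u (rfl | hu)
    · exact ⟨hxy.symm, x, rfl, hxy_reach⟩
    · obtain ⟨z, rfl | rfl, -, hzu⟩ := h u hu
      · exact ⟨fun h ↦ hx (h ▸ hu), _, rfl, hzu⟩
      · exact ⟨fun h ↦ hx (h ▸ hu), x, rfl, hxy_reach.trans hzu⟩
  have hroots : ∀ a ∈ ({x, y} : Set V), ∀ b ∈ ({x, y} : Set V), H.Reachable a b → a = b := by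
    rintro a (rfl | rfl) b (rfl | rfl) hab
    exacts [rfl, (hxy_reach hab).elim, (hxy_reach hab.symm).elim, rfl]
  obtain ⟨u, hu⟩ := hS
  obtain ⟨z, hz, -, hzu⟩ := h u hu
  have huz : u ≠ z := by rintro rfl; rcases hz with rfl | rfl <;> contradiction
  obtain ⟨w, hwz, -⟩ := hzu.symm.exists_adj_dist_lt huz.symm
  have hwS : w ∉ S := by
    intro hw
    obtain ⟨z', hz', hnadj, hz'w⟩ := h w hw
    exact hnadj (hroots z' hz' z hz (hz'w.trans hwz.reachable) ▸ hwz)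
  rw [← Set.ncard_insert_of_notMem hwS]
  refine ncard_le_ncard_edgeSet_of_forall_reachable (R := {x, y})
    (fun a ha b hb hne hab ↦ hne (hroots a ha b hb hab)) ?_
  rintro v (rfl | hv)
  · exact ⟨fun hv ↦ hwz.ne (hroots v hv z hz hwz.reachable), z, hz, hwz.symm.reachable⟩
  · obtain ⟨z', hz', -, hz'v⟩ := h v hv
    exact ⟨by rintro (rfl | rfl) <;> contradiction, z', hz', hz'v⟩

end Forest

section MonochromaticConnection

variable {G : SimpleGraph V} {c : Sym2 V → ℕ}

abbrev colorClass (G : SimpleGraph V) (c : Sym2 V → ℕ) (k : ℕ) : SimpleGraph V :=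
  G.deleteEdges {e | c e ≠ k}

lemma edgeSet_colorClass (k : ℕ) : (G.colorClass c k).edgeSet = {e ∈ G.edgeSet | c e = k} := by
  ext e
  simp [edgeSet_deleteEdges]

lemma IsMCColoring.exists_reachable_colorClass (hc : G.IsMCColoring c) (u v : V) :
    ∃ k, (G.colorClass c k).Reachable u v := by
  obtain ⟨w, k, hw⟩ := hc u v
  exact ⟨k, (w.toDeleteEdges _ fun e he ↦ by simpa using hw e he).reachable⟩

lemma exists_ne_not_adj_of_disjoint {x y : V}
    (hxy : Disjoint (insert x (G.neighborSet x)) (insert y (G.neighborSet y))) (u : V) :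
    ∃ z, (z = x ∨ z = y) ∧ u ≠ z ∧ ¬G.Adj u z := by
  by_contra! hnear
  have hx : u ∈ insert x (G.neighborSet x) :=
    (em (u = x)).imp_right fun h ↦ (hnear x (.inl rfl) h).symm
  exact Set.disjoint_left.mp hxy hx ((em (u = y)).imp_right fun h ↦ (hnear y (.inr rfl) h).symm)

lemma IsMCColoring.exists_root_color (hc : G.IsMCColoring c) {x y : V}
    (hxy : Disjoint (insert x (G.neighborSet x)) (insert y (G.neighborSet y))) :
    ∃ (z : V → V) (f : V → ℕ), (∀ u, (z u = x ∨ z u = y) ∧ u ≠ z u ∧ ¬G.Adj u (z u) ∧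
      (G.colorClass c (f u)).Reachable (z u) u) ∧ f x = f y := by
  choose z hz hz_ne hz_nadj using exists_ne_not_adj_of_disjoint hxy
  have hzx : z x = y := (hz x).resolve_left (hz_ne x).symm
  have hzy : z y = x := (hz y).resolve_right (hz_ne y).symm
  obtain ⟨k₀, hk₀⟩ := hc.exists_reachable_colorClass x y
  have hsel : ∀ u, ∃ k, ((u = x ∨ u = y) → k = k₀) ∧ (G.colorClass c k).Reachable (z u) u := by
    intro u
    by_cases hu : u = x ∨ u = y
    · refine ⟨k₀, fun _ ↦ rfl, ?_⟩
      rcases hu with rfl | rfl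
      exacts [hzx ▸ hk₀.symm, hzy ▸ hk₀]
    · obtain ⟨k, hk⟩ := hc.exists_reachable_colorClass (z u) u
      exact ⟨k, fun h ↦ absurd h hu, hk⟩
  choose f hf₀ hf using hsel
  exact ⟨z, f, fun u ↦ ⟨hz u, hz_ne u, hz_nadj u, hf u⟩,
    (hf₀ x (.inl rfl)).trans (hf₀ y (.inr rfl)).symm⟩

/-- Disjoint closed neighbourhoods say that `x` and `y` are at distance at least three. -/
theorem IsMCColoring.ncard_image_add_card_le [Fintype V] (hc : G.IsMCColoring c) {x y : V}
    (hxy : Disjoint (insert x (G.neighborSet x)) (insert y (G.neighborSet y))) :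
    (c '' G.edgeSet).ncard + Fintype.card V ≤ G.edgeSet.ncard + 2 := by
  have hne : x ≠ y := by
    rintro rfl
    exact Set.disjoint_left.mp hxy (Set.mem_insert x _) (Set.mem_insert x _)
  obtain ⟨z, f, hzf, hfxy⟩ := hc.exists_root_color hxy
  choose hz hz_ne hz_nadj hf using hzf
  have hxy_reach : (G.colorClass c (f x)).Reachable x y := by
    have := hf x
    rwa [(hz x).resolve_left (hz_ne x).symm, reachable_comm] at this
  refine ncard_image_add_card_le_of_fiberwise (Set.toFinite _) c f (f x) (fun u ↦ ?_) ?_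
  · obtain ⟨p, hp, -⟩ := (hf u).exists_adj_dist_lt (hz_ne u)
    have : s(p, u) ∈ (G.colorClass c (f u)).edgeSet := hp
    rw [edgeSet_colorClass] at this
    exact ⟨_, this⟩
  intro k hk
  rw [← edgeSet_colorClass]
  by_cases hkx : k = f x
  · subst hkx
    rw [if_pos rfl]
    suffices {u | f u = f x}.ncard ≤ (G.colorClass c (f x)).edgeSet.ncard + 1 by omega
    refine ncard_le_ncard_edgeSet_add_one (x := x) fun u (hu : f u = f x) ↦ ?_
    have hzu := hf u
    rw [hu] at hzu
    rcases hz u with h | h <;> rw [h] at hzu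
    exacts [hzu, hxy_reach.trans hzu]
  rw [if_neg hkx, add_zero]
  rcases Set.eq_empty_or_nonempty {u | f u = k} with hS | hS
  · obtain ⟨e, he, rfl⟩ := hk
    rw [hS, Set.ncard_empty, zero_add, Nat.one_le_iff_ne_zero]
    exact Set.ncard_ne_zero_of_mem (a := e) (by simpa [edgeSet_colorClass] using he)
  refine ncard_add_one_le_ncard_edgeSet hne hS (fun h ↦ hkx (h : f x = k).symm)
    (fun h ↦ hkx ((h : f y = k).symm.trans hfxy.symm)) fun u (hu : f u = k) ↦ ?_
  exact ⟨z u, hz u, fun h ↦ hz_nadj u (deleteEdges_le _ h), hu ▸ hf u⟩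

theorem Connected.exists_isMCColoring [Fintype V] [Nontrivial V] (hG : G.Connected) :
    ∃ c, G.IsMCColoring c ∧ (c '' G.edgeSet).ncard + Fintype.card V = G.edgeSet.ncard + 2 := by
  classical
  obtain ⟨T, hTG, hT⟩ := hG.exists_isTree_le
  obtain ⟨enc, henc⟩ := Countable.exists_injective_nat (Sym2 V)
  have hTcard : T.edgeSet.ncard + 1 = Fintype.card V := by
    rw [← hT.card_edgeFinset, ← coe_edgeFinset, Set.ncard_coe_finset]
  have hTne : T.edgeSet.Nonempty := by
    rw [← Set.ncard_pos]
    have := Fintype.one_lt_card (α := V)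
    omega
  refine ⟨fun e ↦ if e ∈ T.edgeSet then 0 else enc e + 1, fun u v ↦ ?_, ?_⟩
  · obtain ⟨p⟩ := hT.connected.preconnected u v
    refine ⟨p.mapLe hTG, 0, fun e he ↦ ?_⟩
    rw [Walk.edges_mapLe_eq_edges] at he
    simp [p.edges_subset_edgeSet he]
  have hsplit : G.edgeSet = T.edgeSet ∪ (G.edgeSet \ T.edgeSet) :=
    (Set.union_sdiff_cancel (edgeSet_mono hTG)).symm
  have himage : (fun e ↦ if e ∈ T.edgeSet then 0 else enc e + 1) '' G.edgeSet =
      {0} ∪ (fun e ↦ enc e + 1) '' (G.edgeSet \ T.edgeSet) := by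
    conv_lhs => rw [hsplit, Set.image_union]
    congr 1
    · exact (Set.image_congr fun e he ↦ if_pos he).trans (hTne.image_const 0)
    · exact Set.image_congr fun e he ↦ if_neg he.2
  rw [himage, Set.ncard_union_eq (by simp) (Set.finite_singleton 0) (Set.toFinite _),
    Set.ncard_singleton, Set.ncard_image_of_injective _ fun a b h ↦ henc (by simpa using h),
    Set.ncard_sdiff (edgeSet_mono hTG)]
  have := Set.ncard_le_ncard (edgeSet_mono hTG)
  omega

theorem mc_add_card_eq [Fintype V] [Nontrivial V] (hG : G.Connected) {x y : V}
    (hxy : Disjoint (insert x (G.neighborSet x)) (insert y (G.neighborSet y))) :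
    G.mc + Fintype.card V = G.edgeSet.ncard + 2 := by
  obtain ⟨c, hc, hcard⟩ := hG.exists_isMCColoring
  have hgreatest : IsGreatest {n | ∃ c, G.IsMCColoring c ∧ (c '' G.edgeSet).ncard = n}
      (c '' G.edgeSet).ncard := by
    refine ⟨⟨c, hc, rfl⟩, ?_⟩
    rintro _ ⟨c', hc', rfl⟩
    have := hc'.ncard_image_add_card_le hxy
    omega
  rw [mc, hgreatest.csSup_eq, hcard]

end MonochromaticConnection

section LexProd

variable {α β : Type*}

lemma boxProd_le_lexProd (G : SimpleGraph α) (H : SimpleGraph β) : G.boxProd H ≤ G.lexProd H := by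
  rintro x y (⟨h, -⟩ | ⟨h, hx⟩)
  exacts [Or.inl h, Or.inr ⟨hx, h⟩]

protected theorem Connected.lexProd {G : SimpleGraph α} {H : SimpleGraph β} (hG : G.Connected)
    (hH : H.Connected) : (G.lexProd H).Connected :=
  (hG.boxProd hH).mono (boxProd_le_lexProd G H)

lemma disjoint_closedNeighborSet_lexProd {G : SimpleGraph α} (H : SimpleGraph β) {a a' : α}
    (h : Disjoint (insert a (G.neighborSet a)) (insert a' (G.neighborSet a'))) (b b' : β) :
    Disjoint (insert (a, b) ((G.lexProd H).neighborSet (a, b)))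
      (insert (a', b') ((G.lexProd H).neighborSet (a', b'))) := by
  have hfst : ∀ {a : α} {b : β} {u : α × β},
      u ∈ insert (a, b) ((G.lexProd H).neighborSet (a, b)) → u.1 ∈ insert a (G.neighborSet a) := by
    rintro a b u (rfl | h | ⟨h, -⟩)
    exacts [Or.inl rfl, Or.inr h, Or.inl h.symm]
  exact Set.disjoint_left.mpr fun u hu hu' ↦ Set.disjoint_left.mp h (hfst hu) (hfst hu')

open Finset in
lemma degree_lexProd [Fintype α] [Fintype β] [DecidableEq α] [DecidableEq β]
    (G : SimpleGraph α) (H : SimpleGraph β) [DecidableRel G.Adj] [DecidableRel H.Adj]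
    [DecidableRel (G.lexProd H).Adj] (a : α) (b : β) :
    (G.lexProd H).degree (a, b) = G.degree a * Fintype.card β + H.degree b := by
  have hnbr : (G.lexProd H).neighborFinset (a, b) =
      G.neighborFinset a ×ˢ univ ∪ {a} ×ˢ H.neighborFinset b := by
    ext w
    simp only [mem_neighborFinset, mem_union, mem_product, mem_univ, and_true, mem_singleton]
    exact or_congr_right (and_congr_left' eq_comm)
  have hdisj : Disjoint (G.neighborFinset a ×ˢ (univ : Finset β)) ({a} ×ˢ H.neighborFinset b) := by
    refine Finset.disjoint_left.mpr ?_
    rintro ⟨a', b'⟩ h₁ h₂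
    simp only [mem_product, mem_singleton, mem_neighborFinset] at h₁ h₂
    exact G.loopless.irrefl a (h₂.1 ▸ h₁.1)
  rw [← card_neighborFinset_eq_degree, hnbr, card_union_of_disjoint hdisj, card_product,
    card_product, card_singleton, one_mul, card_univ, card_neighborFinset_eq_degree,
    card_neighborFinset_eq_degree]

open Finset in
theorem ncard_edgeSet_lexProd [Fintype α] [Fintype β] (G : SimpleGraph α) (H : SimpleGraph β) :
    (G.lexProd H).edgeSet.ncard =
      G.edgeSet.ncard * Fintype.card β ^ 2 + Fintype.card α * H.edgeSet.ncard := by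
  classical
  have hsum : 2 * #(G.lexProd H).edgeFinset =
      2 * (#G.edgeFinset * Fintype.card β ^ 2 + Fintype.card α * #H.edgeFinset) := by
    rw [← sum_degrees_eq_twice_card_edges, Fintype.sum_prod_type]
    simp only [degree_lexProd, sum_add_distrib, ← sum_mul]
    simp only [Finset.sum_const, Finset.card_univ, smul_eq_mul, ← mul_sum,
      sum_degrees_eq_twice_card_edges]
    ring
  simp only [← coe_edgeFinset, Set.ncard_coe_finset]
  omega

end LexProd

lemma ncard_edgeSet_pathGraph (n : ℕ) : (pathGraph (n + 1)).edgeSet.ncard = n := by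
  have : (pathGraph (n + 1)).edgeSet = Set.range fun i : Fin n ↦ s(i.castSucc, i.succ) := by
    ext e
    induction e with
    | _ u v =>
      simp only [mem_edgeSet, pathGraph_adj, Set.mem_range, Sym2.eq_iff, Fin.ext_iff,
        Fin.val_castSucc, Fin.val_succ]
      constructor
      · rintro (h | h)
        · exact ⟨⟨u, by omega⟩, .inl ⟨rfl, h⟩⟩
        · exact ⟨⟨v, by omega⟩, .inr ⟨rfl, h⟩⟩
      · rintro ⟨i, ⟨h₁, h₂⟩ | ⟨h₁, h₂⟩⟩ <;> omega
  rw [this, Set.ncard_range_of_injective, Nat.card_fin]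
  intro i j h
  simp only [Sym2.eq_iff, Fin.ext_iff, Fin.val_castSucc, Fin.val_succ] at h
  exact Fin.ext (by omega)

lemma disjoint_closedNeighborSet_pathGraph (n : ℕ) :
    Disjoint (insert 0 ((pathGraph (n + 4)).neighborSet 0))
      (insert 3 ((pathGraph (n + 4)).neighborSet 3)) := by
  have h3 : ((3 : Fin (n + 4)) : ℕ) = 3 := Nat.mod_eq_of_lt (by omega : 3 < n + 4)
  refine Set.disjoint_left.mpr fun u hu hu' ↦ ?_
  simp only [Set.mem_insert_iff, mem_neighborSet, pathGraph_adj, Fin.ext_iff, Fin.val_zero,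
    h3] at hu hu'
  omega

end SimpleGraph

/-- Proposition 3.1(ii): for `n ≥ 4`, `m ≥ 3`, `mc(P_n ∘ P_m) = m²n - m² - n + 2`. -/
theorem mc_lex_paths (n m : ℕ) (hn : 4 ≤ n) (hm : 3 ≤ m) :
    ((pathGraph n).lexProd (pathGraph m)).mc = m ^ 2 * n - m ^ 2 - n + 2 := by
  obtain ⟨n, rfl⟩ := Nat.exists_eq_add_of_le' hn
  obtain ⟨m, rfl⟩ := Nat.exists_eq_add_of_le' (by omega : 1 ≤ m)
  have key := mc_add_card_eq ((pathGraph_connected (n + 3)).lexProd (pathGraph_connected m))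
    (disjoint_closedNeighborSet_lexProd _ (disjoint_closedNeighborSet_pathGraph n) 0 0)
  rw [ncard_edgeSet_lexProd, ncard_edgeSet_pathGraph, ncard_edgeSet_pathGraph, Fintype.card_prod,
    Fintype.card_fin, Fintype.card_fin, show n + 3 + 1 = n + 4 from rfl] at key
  have h₁ : (m + 1) ^ 2 * (n + 4) = (n + 3) * (m + 1) ^ 2 + (m + 1) ^ 2 := by ring
  have h₂ : (n + 4) * (m + 1) = (n + 4) * m + (n + 4) := by ring
  have h₃ : n + 4 ≤ (n + 3) * (m + 1) ^ 2 :=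
    calc n + 4 ≤ (n + 3) * 2 ^ 2 := by omega
      _ ≤ (n + 3) * (m + 1) ^ 2 := by gcongr; omega
  omega
end
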